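/- arXiv:2604.21392 — 4 statements merged into one kernel-verified Lean document; each statement's English description precedes it below -/
import Mathlib

section
/- Let G be a compact abelian topological group with closed subgroup H, let π : G → G/H be the quotient map, and let κ be a Borel probability measure on G/H. Then there exists a unique Borel probability measure κ̃ on G such that (i) κ̃ is invariant under translation by every element of H, and (ii) π pushes κ̃ forward to κ. -/
open MeasureTheory Set Function MeasurableSpace
open scoped ENNReal

lemma polish_of_compact_t2 {X : Type*} [TopologicalSpace X] [CompactSpace X] [T2Space X]
    [SecondCountableTopology X] : PolishSpace X := by
  letI : MetricSpace X := TopologicalSpace.metrizableSpaceMetric X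
  infer_instance

section Aux

variable {G : Type*} [AddCommGroup G] [TopologicalSpace G] [IsTopologicalAddGroup G]
    [CompactSpace G] [SecondCountableTopology G] [T2Space G]
    [MeasurableSpace G] [BorelSpace G]
    {Q : Type*} [AddCommGroup Q] [TopologicalSpace Q] [IsTopologicalAddGroup Q]
    [CompactSpace Q] [SecondCountableTopology Q] [T2Space Q]
    [MeasurableSpace Q] [BorelSpace Q]

theorem aux_lift (φ : G →+ Q) (hφc : Continuous φ) (hφs : Function.Surjective φ)
    (κ : Measure Q) [IsProbabilityMeasure κ] :
    ∃! κt : Measure G,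
      IsProbabilityMeasure κt ∧
      (∀ h, φ h = 0 → Measure.map (fun g => g + h) κt = κt) ∧
      Measure.map φ κt = κ := by
  classical
  haveI : PolishSpace G := polish_of_compact_t2
  haveI : PolishSpace Q := polish_of_compact_t2
  set K : AddSubgroup G := φ.ker with hK
  have hKmem : ∀ x : G, x ∈ K ↔ φ x = 0 := fun x => φ.mem_ker
  have hKclosed : IsClosed (K : Set G) := by
    have : (K : Set G) = φ ⁻¹' {0} := by ext x; simp [hKmem]
    rw [this]; exact isClosed_singleton.preimage hφc
  haveI : CompactSpace K := isCompact_iff_compactSpace.mp (hKclosed.isCompact)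
  haveI : Nonempty K := ⟨0⟩
  haveI : BorelSpace K := Subtype.borelSpace (K : Set G)
  set lam : Measure K := Measure.addHaarMeasure ⊤ with hlam
  haveI : IsProbabilityMeasure lam := by
    constructor
    rw [hlam, ← TopologicalSpace.PositiveCompacts.coe_top (α := K)]
    exact Measure.addHaarMeasure_self
  have hlam_inv : ∀ k₀ : K, Measure.map (fun k => k₀ + k) lam = lam :=
    fun k₀ => map_add_left_eq_self lam k₀
  -- the fiber-averaging function
  set F : Set G → G → ℝ≥0∞ := fun A x => lam {k : K | x + (k : G) ∈ A} with hF
  have hsetmeas : ∀ {A : Set G}, MeasurableSet A → ∀ x : G,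
      MeasurableSet {k : K | x + (k : G) ∈ A} := by
    intro A hA x
    have : Continuous fun k : K => x + (k : G) := continuous_const.add continuous_subtype_val
    exact hA.preimage this.measurable
  have hFmeas : ∀ {A : Set G}, MeasurableSet A → Measurable (F A) := by
    intro A hA
    have hS : MeasurableSet {p : G × K | p.1 + (p.2 : G) ∈ A} := by
      have : Continuous fun p : G × K => p.1 + (p.2 : G) :=
        continuous_fst.add (continuous_subtype_val.comp continuous_snd)
      exact hA.preimage this.measurable
    exact measurable_measure_prodMk_left hS
  have hcore : ∀ {A : Set G}, MeasurableSet A → ∀ (k₀ : K) (x : G),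
      lam {k : K | (x + (k₀ : G)) + (k : G) ∈ A} = F A x := by
    intro A hA k₀ x
    have key : ∀ k : K, (x + (k₀ : G)) + (k : G) = x + ((k₀ + k : K) : G) := by
      intro k; push_cast; abel
    have hset : {k : K | (x + (k₀ : G)) + (k : G) ∈ A}
        = (fun k => k₀ + k) ⁻¹' {k : K | x + (k : G) ∈ A} := by
      ext k; simp only [Set.mem_setOf_eq, Set.mem_preimage, key]
    rw [hset, ← Measure.map_apply (measurable_const_add k₀) (hsetmeas hA x), hlam_inv k₀]
  have hFtrans : ∀ {A : Set G}, MeasurableSet A → ∀ (k₀ : K) (x : G),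
      F ((fun g => g + (k₀ : G)) ⁻¹' A) x = F A x := by
    intro A hA k₀ x
    have hset : {k : K | x + (k : G) ∈ (fun g => g + (k₀ : G)) ⁻¹' A}
        = {k : K | (x + (k₀ : G)) + (k : G) ∈ A} := by
      ext k; simp only [Set.mem_setOf_eq, Set.mem_preimage]
      rw [add_right_comm]
    simp only [hF]
    rw [hset]
    exact hcore hA k₀ x
  have hFconst : ∀ {A : Set G}, MeasurableSet A → ∀ x y : G, φ x = φ y → F A x = F A y := by
    intro A hA x y hxy
    have hk : y - x ∈ K := by rw [hKmem, map_sub, hxy, sub_self]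
    have hy : y = x + ((⟨y - x, hk⟩ : K) : G) := by simp
    rw [hy]
    have hset : {k : K | (x + ((⟨y - x, hk⟩ : K) : G)) + (k : G) ∈ A}
        = {k : K | (x + ((⟨y - x, hk⟩ : K) : G)) + (k : G) ∈ A} := rfl
    rw [show F A (x + ((⟨y - x, hk⟩ : K) : G))
        = lam {k : K | (x + ((⟨y - x, hk⟩ : K) : G)) + (k : G) ∈ A} from rfl,
      hcore hA ⟨y - x, hk⟩ x]
  -- the section
  set t : Q → G := Function.surjInv hφs with ht
  have hts : ∀ q, φ (t q) = q := Function.rightInverse_surjInv hφs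
  have hFbar : ∀ {A : Set G}, MeasurableSet A → Measurable (fun q => F A (t q)) := by
    intro A hA
    have hcomp : (fun q => F A (t q)) ∘ φ = F A := by
      funext x
      exact hFconst hA (t (φ x)) x (hts (φ x))
    exact (Measurable.measurable_comp_iff_of_surjective hφc.measurable hφs).mp
      (by rw [hcomp]; exact hFmeas hA)
  have hFpre : ∀ {B : Set Q}, MeasurableSet B → ∀ x, F (φ ⁻¹' B) x = B.indicator 1 (φ x) := by
    intro B hB x
    have hφk : ∀ k : K, φ (x + (k : G)) = φ x := by
      intro k; rw [map_add, (hKmem (k : G)).mp k.2, add_zero]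
    have hset : {k : K | x + (k : G) ∈ φ ⁻¹' B} = if φ x ∈ B then (univ : Set K) else ∅ := by
      split_ifs with h <;> ext k <;> simp [Set.mem_preimage, hφk, h]
    simp only [hF, hset]
    split_ifs with h <;> simp [Set.indicator_apply, h]
  have hFuniv : ∀ x, F univ x = 1 := by
    intro x; simp only [hF, Set.mem_univ, Set.setOf_true]; exact measure_univ
  -- the candidate measure
  set m : Measure G := Measure.ofMeasurable (fun A _ => ∫⁻ q, F A (t q) ∂κ)
    (by
      have : ∀ q, F (∅ : Set G) (t q) = 0 := by
        intro q; simp [hF]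
      simp only [this, lintegral_zero])
    (by
      intro f hf hd
      have hU : ∀ q, F (⋃ i, f i) (t q) = ∑' i, F (f i) (t q) := by
        intro q
        have hset : {k : K | t q + (k : G) ∈ ⋃ i, f i} = ⋃ i, {k : K | t q + (k : G) ∈ f i} := by
          ext k; simp
        have hdisj : Pairwise (Disjoint on fun i => {k : K | t q + (k : G) ∈ f i}) := by
          intro i j hij
          exact (hd hij).preimage (fun k : K => t q + (k : G))
        simp only [hF]
        rw [hset, measure_iUnion hdisj (fun i => hsetmeas (hf i) (t q))]
      simp only [hU]
      exact lintegral_tsum (fun i => (hFbar (hf i)).aemeasurable)) with hm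
  have hmA : ∀ {A : Set G}, (hA : MeasurableSet A) → m A = ∫⁻ q, F A (t q) ∂κ := by
    intro A hA
    rw [hm]
    exact Measure.ofMeasurable_apply A hA
  -- integral representation satisfied by any solution
  have keyint : ∀ (μt : Measure G), IsProbabilityMeasure μt →
      (∀ h, φ h = 0 → Measure.map (fun g => g + h) μt = μt) →
      Measure.map φ μt = κ →
      ∀ {A : Set G}, MeasurableSet A → μt A = ∫⁻ q, F A (t q) ∂κ := by
    intro μt hprob hinv hmap A hA
    have hpre : ∀ k : K, MeasurableSet ((fun g => g + (k : G)) ⁻¹' A) :=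
      fun k => (measurable_add_const (k : G)) hA
    have h1 : ∀ k : K, μt ((fun g => g + (k : G)) ⁻¹' A) = μt A := by
      intro k
      rw [← Measure.map_apply (measurable_add_const (k : G)) hA,
        hinv (k : G) ((hKmem (k : G)).mp k.2)]
    have h2 : μt A = ∫⁻ k : K, μt ((fun g => g + (k : G)) ⁻¹' A) ∂lam := by
      simp only [h1]
      rw [lintegral_const, measure_univ, mul_one]
    have hind : ∀ (k : K) (x : G),
        A.indicator (1 : G → ℝ≥0∞) (x + (k : G))
          = ((fun g => g + (k : G)) ⁻¹' A).indicator (1 : G → ℝ≥0∞) x := by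
      intro k x
      by_cases h : x + (k : G) ∈ A <;>
        simp [Set.indicator_apply, Set.mem_preimage, h]
    have h3 : ∀ k : K, μt ((fun g => g + (k : G)) ⁻¹' A)
        = ∫⁻ x, A.indicator (1 : G → ℝ≥0∞) (x + (k : G)) ∂μt := by
      intro k
      simp only [hind k]
      rw [lintegral_indicator_one (hpre k)]
    have hswap : ∫⁻ k : K, ∫⁻ x, A.indicator (1 : G → ℝ≥0∞) (x + (k : G)) ∂μt ∂lam
        = ∫⁻ x, ∫⁻ k : K, A.indicator (1 : G → ℝ≥0∞) (x + (k : G)) ∂lam ∂μt := by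
      apply lintegral_lintegral_swap
      apply Measurable.aemeasurable
      have hg : Measurable fun p : K × G => p.2 + (p.1 : G) :=
        measurable_snd.add (measurable_subtype_coe.comp measurable_fst)
      exact (measurable_one.indicator hA).comp hg
    have hinner : ∀ x : G, ∫⁻ k : K, A.indicator (1 : G → ℝ≥0∞) (x + (k : G)) ∂lam = F A x := by
      intro x
      have : ∀ k : K, A.indicator (1 : G → ℝ≥0∞) (x + (k : G))
          = ({k : K | x + (k : G) ∈ A}).indicator (1 : K → ℝ≥0∞) k := by
        intro k
        by_cases h : x + (k : G) ∈ A <;> simp [Set.indicator_apply, h]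
      simp only [this]
      rw [lintegral_indicator_one (hsetmeas hA x)]
    have h4 : μt A = ∫⁻ x, F A x ∂μt := by
      rw [h2]
      simp only [h3]
      rw [hswap]
      exact lintegral_congr hinner
    have h5 : ∫⁻ x, F A x ∂μt = ∫⁻ q, F A (t q) ∂κ := by
      have : ∀ x : G, F A x = F A (t (φ x)) :=
        fun x => hFconst hA x (t (φ x)) (hts (φ x)).symm
      calc ∫⁻ x, F A x ∂μt = ∫⁻ x, F A (t (φ x)) ∂μt := lintegral_congr this
        _ = ∫⁻ q, F A (t q) ∂(Measure.map φ μt) :=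
            (lintegral_map (hFbar hA) hφc.measurable).symm
        _ = ∫⁻ q, F A (t q) ∂κ := by rw [hmap]
    rw [h4, h5]
  refine ⟨m, ⟨?_, ?_, ?_⟩, ?_⟩
  · constructor
    rw [hmA MeasurableSet.univ]
    simp only [hFuniv]
    rw [lintegral_one, measure_univ]
  · intro h hh
    have hk : h ∈ K := (hKmem h).mpr hh
    apply Measure.ext
    intro A hA
    rw [Measure.map_apply (measurable_add_const h) hA,
      hmA ((measurable_add_const h) hA), hmA hA]
    exact lintegral_congr fun q => hFtrans hA ⟨h, hk⟩ (t q)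
  · apply Measure.ext
    intro B hB
    rw [Measure.map_apply hφc.measurable hB, hmA (hφc.measurable hB)]
    calc ∫⁻ q, F (φ ⁻¹' B) (t q) ∂κ = ∫⁻ q, B.indicator 1 q ∂κ :=
          lintegral_congr fun q => by rw [hFpre hB, hts]
      _ = κ B := lintegral_indicator_one hB
  · rintro μt ⟨hp, hi, hm'⟩
    apply Measure.ext
    intro A hA
    rw [keyint μt hp hi hm' hA, hmA hA]

end Aux

/-- **Lifting a measure from a quotient group.**
Let `G` be a compact abelian (second countable) group, `H` a closed subgroup, `π : G → G/H`
the quotient map, and `κ` a Borel probability measure on `G/H`.  Then there is a unique Borel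
probability measure `κ̃` on `G` which is invariant under translation by every element of `H`
and pushes forward to `κ` under `π`. -/
theorem stmt_2 {G : Type*} [AddCommGroup G] [TopologicalSpace G] [IsTopologicalAddGroup G]
    [CompactSpace G] [SecondCountableTopology G] [MeasurableSpace G] [BorelSpace G]
    (H : AddSubgroup G) (hH : IsClosed (H : Set G))
    [MeasurableSpace (G ⧸ H)] [BorelSpace (G ⧸ H)]
    (κ : Measure (G ⧸ H)) [IsProbabilityMeasure κ] :
    ∃! κt : Measure G,
      IsProbabilityMeasure κt ∧
      (∀ h ∈ H, Measure.map (fun g => g + h) κt = κt) ∧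
      Measure.map (QuotientAddGroup.mk : G → G ⧸ H) κt = κ := by
  classical
  set N : AddSubgroup G := (⊥ : AddSubgroup G).topologicalClosure with hN
  have hNclosed : IsClosed (N : Set G) := AddSubgroup.isClosed_topologicalClosure _
  have hNH : N ≤ H := AddSubgroup.topologicalClosure_minimal _ bot_le hH
  letI m2 : MeasurableSpace (G ⧸ N) := borel (G ⧸ N)
  haveI : BorelSpace (G ⧸ N) := ⟨rfl⟩
  haveI : IsClosed ((N : AddSubgroup G) : Set G) := hNclosed
  haveI : IsClosed ((H : AddSubgroup G) : Set G) := hH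
  haveI : T2Space (G ⧸ N) := inferInstance
  haveI : T2Space (G ⧸ H) := inferInstance
  set p : G → G ⧸ N := QuotientAddGroup.mk with hp
  have hpcont : Continuous p := continuous_quotient_mk'
  have hpsurj : Function.Surjective p := QuotientAddGroup.mk_surjective
  have hNH' : N ≤ AddSubgroup.comap (AddMonoidHom.id G) H := by simpa using hNH
  set φ : G ⧸ N →+ G ⧸ H := QuotientAddGroup.map N H (AddMonoidHom.id G) hNH' with hφ
  have hφp : ∀ x : G, φ (p x) = (QuotientAddGroup.mk x : G ⧸ H) := fun x =>
    QuotientAddGroup.map_mk N H (AddMonoidHom.id G) hNH' x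
  have hφc : Continuous φ := by
    rw [(QuotientAddGroup.isQuotientMap_mk N).continuous_iff]
    have : (⇑φ ∘ p) = fun x : G => (QuotientAddGroup.mk x : G ⧸ H) := funext hφp
    rw [this]
    exact continuous_quotient_mk'
  have hφs : Function.Surjective φ := by
    intro q
    obtain ⟨x, rfl⟩ := QuotientAddGroup.mk_surjective q
    exact ⟨p x, hφp x⟩
  -- saturation of open sets with respect to p
  have hsat : ∀ U : Set G, IsOpen U → p ⁻¹' (p '' U) = U := by
    intro U hU
    apply Set.Subset.antisymm
    · rintro x ⟨u, hu, hux⟩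
      have hn : x - u ∈ N := by
        have : (u : G ⧸ N) = (x : G ⧸ N) := hux
        rw [QuotientAddGroup.eq] at this
        simpa [sub_eq_add_neg, add_comm] using this
      have hneg : -(x - u) ∈ closure ({0} : Set G) := by
        have h' : -(x - u) ∈ (N : Set G) := N.neg_mem hn
        rwa [hN, AddSubgroup.topologicalClosure_coe, AddSubgroup.coe_bot] at h'
      have h0cl : (0 : G) ∈ closure ({x - u} : Set G) := by
        have himg := (Homeomorph.addLeft (x - u)).image_closure ({0} : Set G)
        rw [show ({x - u} : Set G) = (Homeomorph.addLeft (x - u)) '' {0} by simp,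
          ← himg]
        exact ⟨-(x - u), hneg, by simp⟩
      have hV : IsOpen ((fun y => u + y) ⁻¹' U) :=
        hU.preimage (continuous_const.add continuous_id)
      have h0V : (0 : G) ∈ (fun y => u + y) ⁻¹' U := by simpa using hu
      obtain ⟨z, hz1, hz2⟩ := _root_.mem_closure_iff.mp h0cl _ hV h0V
      rw [Set.mem_singleton_iff] at hz2
      subst hz2
      simpa using hz1
    · intro x hx; exact ⟨x, hx, rfl⟩
  have hGm : (inferInstance : MeasurableSpace G) = MeasurableSpace.comap p m2 := by
    have hGb := BorelSpace.measurable_eq (α := G)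
    rw [hGb]
    show borel G = MeasurableSpace.comap p (borel (G ⧸ N))
    rw [borel, borel, MeasurableSpace.comap_generateFrom]
    apply le_antisymm
    · apply MeasurableSpace.generateFrom_le
      intro U hU
      exact MeasurableSpace.measurableSet_generateFrom
        ⟨p '' U, (QuotientAddGroup.isOpenQuotientMap_mk).isOpenMap U hU, hsat U hU⟩
    · apply MeasurableSpace.generateFrom_le
      rintro s ⟨B, hB, rfl⟩
      exact MeasurableSpace.measurableSet_generateFrom (hB.preimage hpcont)
  have hBmeas : ∀ {A : Set G}, MeasurableSet A →
      ∃ B : Set (G ⧸ N), MeasurableSet B ∧ A = p ⁻¹' B := by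
    intro A hA
    have hA' : MeasurableSet[MeasurableSpace.comap p m2] A := hGm ▸ hA
    obtain ⟨B, hB, hBA⟩ := hA'
    exact ⟨B, hB, hBA.symm⟩
  set τ : G ⧸ N → G := Function.surjInv hpsurj with hτ
  have hτp : ∀ q, p (τ q) = q := Function.rightInverse_surjInv hpsurj
  have hτmeas : Measurable τ := by
    intro A hA
    obtain ⟨B, hB, rfl⟩ := hBmeas hA
    have : τ ⁻¹' (p ⁻¹' B) = B := by
      ext q; simp [Set.mem_preimage, hτp]
    rw [this]; exact hB
  have hpmeas : Measurable p := hpcont.measurable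
  have hretr : ∀ mG : Measure G, Measure.map τ (Measure.map p mG) = mG := by
    intro mG
    apply Measure.ext
    intro A hA
    obtain ⟨B, hB, rfl⟩ := hBmeas hA
    rw [Measure.map_apply hτmeas hA,
      show τ ⁻¹' (p ⁻¹' B) = B by ext q; simp [Set.mem_preimage, hτp],
      Measure.map_apply hpmeas hB]
  have hinj : ∀ m1 m2 : Measure G, Measure.map p m1 = Measure.map p m2 → m1 = m2 := by
    intro m1 m2 hm
    rw [← hretr m1, ← hretr m2, hm]
  obtain ⟨κ₂, ⟨h2p, h2i, h2m⟩, h2u⟩ := aux_lift φ hφc hφs κ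
  have hpτ : Measure.map p (Measure.map τ κ₂) = κ₂ := by
    rw [Measure.map_map hpmeas hτmeas, show p ∘ τ = id from funext hτp, Measure.map_id]
  have hcomm : ∀ h : G, p ∘ (fun g => g + h) = (fun q => q + p h) ∘ p := by
    intro h; funext g
    rfl
  refine ⟨Measure.map τ κ₂, ⟨?_, ?_, ?_⟩, ?_⟩
  · exact Measure.isProbabilityMeasure_map hτmeas.aemeasurable
  · intro h hh
    apply hinj
    rw [Measure.map_map hpmeas (measurable_add_const h), hcomm h,
      ← Measure.map_map (measurable_add_const (p h)) hpmeas, hpτ]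
    exact h2i (p h) (by rw [hφp h]; exact (QuotientAddGroup.eq_zero_iff h).mpr hh)
  · have hmkmeas : Measurable (QuotientAddGroup.mk : G → G ⧸ H) :=
      continuous_quotient_mk'.measurable
    have hmkτ : (QuotientAddGroup.mk : G → G ⧸ H) ∘ τ = ⇑φ := by
      funext q
      have h' := (hφp (τ q)).symm
      rw [hτp q] at h'
      exact h'
    rw [Measure.map_map hmkmeas hτmeas, hmkτ, h2m]
  · rintro κt ⟨hkp, hki, hkm⟩
    have h2 : Measure.map p κt = κ₂ := by
      apply h2u
      refine ⟨Measure.isProbabilityMeasure_map hpmeas.aemeasurable, ?_, ?_⟩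
      · intro h2 hker
        obtain ⟨g, rfl⟩ := hpsurj h2
        have hgH : g ∈ H := by
          rw [hφp g] at hker
          exact (QuotientAddGroup.eq_zero_iff g).mp hker
        rw [Measure.map_map (measurable_add_const (p g)) hpmeas, ← hcomm g,
          ← Measure.map_map hpmeas (measurable_add_const g), hki g hgH]
      · rw [Measure.map_map hφc.measurable hpmeas,
          show ⇑φ ∘ p = (QuotientAddGroup.mk : G → G ⧸ H) from funext hφp, hkm]
    rw [← hretr κt, h2]
end

section
/- Let G be a compact abelian group, H ⊆ G a closed subgroup, and ξ a Borel probability measure on G invariant under translation by every element of H. Then ξ = ∫_G (λ_H ∘ R_g^{-1}) dξ(g), i.e. ξ equals the average over g (distributed according to ξ) of the Haar measure of H translated by g. -/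
open MeasureTheory

/-- **Decomposition of an `H`-invariant measure into translated Haar measures of `H`.**
Let `G` be a compact abelian (second countable) group, `H` a closed subgroup with Haar
probability measure `λ_H` (characterized as a probability measure on `G` carried by `H`
and invariant under translations by elements of `H`).  If `ξ` is a Borel probability
measure on `G` invariant under translation by every element of `H`, then
`ξ = ∫_G (λ_H ∘ R_g⁻¹) dξ(g)`, i.e. `ξ` is the `ξ`-average of the translates of `λ_H`. -/
theorem stmt_3 {G : Type*} [AddCommGroup G] [TopologicalSpace G] [IsTopologicalAddGroup G]
    [CompactSpace G] [SecondCountableTopology G] [MeasurableSpace G] [BorelSpace G]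
    (H : AddSubgroup G) (hH : IsClosed (H : Set G))
    (lamH : Measure G) [IsProbabilityMeasure lamH]
    (hlamH_supp : lamH (H : Set G) = 1)
    (hlamH_inv : ∀ h ∈ H, Measure.map (fun x => x + h) lamH = lamH)
    (ξ : Measure G) [IsProbabilityMeasure ξ]
    (hξ_inv : ∀ h ∈ H, Measure.map (fun x => x + h) ξ = ξ) :
    ξ = ξ.bind (fun g => Measure.map (fun x => x + g) lamH) := by
  have hmeas : Measurable fun g : G => Measure.map (fun x => x + g) lamH := by
    apply Measure.measurable_of_measurable_coe
    intro s hs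
    simp_rw [Measure.map_apply (measurable_add_const _) hs]
    have ht : MeasurableSet ((fun p : G × G => p.1 + p.2) ⁻¹' s) :=
      (measurable_fst.add measurable_snd) hs
    exact measurable_measure_prodMk_right ht
  ext s hs
  rw [Measure.bind_apply hs hmeas.aemeasurable]
  have ht : MeasurableSet ((fun p : G × G => p.1 + p.2) ⁻¹' s) :=
    (measurable_fst.add measurable_snd) hs
  have h1 : ∫⁻ g, Measure.map (fun x => x + g) lamH s ∂ξ
      = (lamH.prod ξ) ((fun p : G × G => p.1 + p.2) ⁻¹' s) := by
    rw [Measure.prod_apply_symm ht]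
    simp_rw [Measure.map_apply (measurable_add_const _) hs]
    rfl
  have h2 : (lamH.prod ξ) ((fun p : G × G => p.1 + p.2) ⁻¹' s) = ξ s := by
    rw [Measure.prod_apply ht]
    have hae : ∀ᵐ x ∂lamH, x ∈ (H : Set G) := by
      rw [ae_iff]
      have : lamH ((H : Set G)ᶜ) = 0 := by
        have := measure_compl hH.measurableSet (measure_ne_top lamH _)
        rw [hlamH_supp, measure_univ] at this
        simpa using this
      exact this
    have : ∀ᵐ x ∂lamH, ξ (Prod.mk x ⁻¹' ((fun p : G × G => p.1 + p.2) ⁻¹' s)) = ξ s := by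
      filter_upwards [hae] with x hx
      have : Prod.mk x ⁻¹' ((fun p : G × G => p.1 + p.2) ⁻¹' s)
          = (fun g => g + x) ⁻¹' s := by
        ext g; simp [add_comm]
      rw [this, ← Measure.map_apply (measurable_add_const x) hs, hξ_inv x hx]
    rw [lintegral_congr_ae this, lintegral_const, measure_univ, mul_one]
  rw [h1, h2]
end

section
/- Let (K, r) be a compact metric space and A a symmetric G_δ subset of K × K. If there is an uncountable subset R ⊆ K such that (R × R) \ {(k, k) : k ∈ K} ⊆ A, then there is a nonempty perfect subset P ⊆ K such that (P × P) \ {(k, k) : k ∈ K} ⊆ A. -/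
open Metric Set

lemma aux_sep {K : Type*} [MetricSpace K] {ι : Type*} [Fintype ι] (z : ι → K)
    (hz : Function.Injective z) (V : Set (K × K)) (hV : IsOpen V)
    (hzV : ∀ i j, i ≠ j → (z i, z j) ∈ V) :
    ∃ ε > 0, ∀ i j, i ≠ j → (closedBall (z i) ε ×ˢ closedBall (z j) ε ⊆ V ∧
      Disjoint (closedBall (z i) ε) (closedBall (z j) ε)) := by
  have h : ∀ p : ι × ι, ∃ δ, 0 < δ ∧ (p.1 ≠ p.2 →
      (ball (z p.1) δ ×ˢ ball (z p.2) δ ⊆ V ∧ 3 * δ ≤ dist (z p.1) (z p.2))) := by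
    rintro ⟨i, j⟩
    by_cases hij : i = j
    · exact ⟨1, one_pos, fun h => absurd hij h⟩
    · obtain ⟨δ, hδ, hsub⟩ := Metric.isOpen_iff.1 hV (z i, z j) (hzV i j hij)
      have hd : 0 < dist (z i) (z j) := dist_pos.2 fun h => hij (hz h)
      refine ⟨min δ (dist (z i) (z j) / 3), by positivity, fun _ => ⟨?_, ?_⟩⟩
      · refine subset_trans ?_ hsub
        rw [← ball_prod_same]
        exact Set.prod_mono (ball_subset_ball (min_le_left _ _)) (ball_subset_ball (min_le_left _ _))
      · have := min_le_right δ (dist (z i) (z j) / 3)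
        linarith
  choose δ hδpos hδ using h
  rcases isEmpty_or_nonempty ι with hι | hι
  · exact ⟨1, one_pos, fun i => (IsEmpty.false i).elim⟩
  · have hne : (Finset.univ : Finset (ι × ι)).Nonempty := Finset.univ_nonempty
    set m := Finset.univ.inf' hne δ with hm
    have hmpos : 0 < m := (Finset.lt_inf'_iff hne).2 fun p _ => hδpos p
    have hmle : ∀ p : ι × ι, m ≤ δ p := fun p => Finset.inf'_le _ (Finset.mem_univ p)
    refine ⟨m / 2, by positivity, fun i j hij => ⟨?_, ?_⟩⟩
    · refine subset_trans ?_ ((hδ (i, j) hij).1)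
      have hlt : m / 2 < δ (i, j) := lt_of_lt_of_le (by linarith) (hmle (i, j))
      exact Set.prod_mono (closedBall_subset_ball hlt) (closedBall_subset_ball hlt)
    · refine Metric.closedBall_disjoint_closedBall ?_
      have h3 := (hδ (i, j) hij).2
      have := hmle (i, j)
      have hd : 0 < dist (z i) (z j) := dist_pos.2 fun h => hij (hz h)
      simp only at h3 ⊢
      linarith

set_option maxHeartbeats 1000000 in
lemma aux_cond {K : Type*} [MetricSpace K] [SecondCountableTopology K]
    (R : Set K) (hR : ¬ R.Countable) :
    ∃ R' : Set K, R' ⊆ R ∧ ¬ R'.Countable ∧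
      ∀ x ∈ R', ∀ ε > 0, ¬ (R' ∩ Metric.ball x ε).Countable := by
  obtain ⟨b, hbc, -, hbasis⟩ := TopologicalSpace.exists_countable_basis K
  set R' := {x ∈ R | ∀ ε > 0, ¬ (R ∩ Metric.ball x ε).Countable} with hR'def
  have hsub : R \ R' ⊆ ⋃ s ∈ {s ∈ b | (R ∩ s).Countable}, R ∩ s := by
    rintro x ⟨hxR, hx⟩
    simp only [hR'def, mem_setOf_eq, not_and, not_forall] at hx
    obtain ⟨ε, hε, hc⟩ := hx hxR
    rw [not_not] at hc
    obtain ⟨s, hsb, hxs, hss⟩ := hbasis.exists_subset_of_mem_open (Metric.mem_ball_self hε)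
      Metric.isOpen_ball
    exact mem_biUnion ⟨hsb, (hc.mono (Set.inter_subset_inter_right _ hss))⟩ ⟨hxR, hxs⟩
  have h1 : ({s ∈ b | (R ∩ s).Countable}).Countable := hbc.mono (sep_subset _ _)
  have h2 : (⋃ s ∈ {s ∈ b | (R ∩ s).Countable}, R ∩ s).Countable :=
    h1.biUnion fun s hs => hs.2
  have hcnt : (R \ R').Countable := h2.mono hsub
  have hR'R : R' ⊆ R := fun x hx => hx.1
  have hR'unc : ¬ R'.Countable := by
    intro h
    exact hR ((h.union hcnt).mono fun x hx => by
      by_cases hx' : x ∈ R'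
      · exact Or.inl hx'
      · exact Or.inr ⟨hx, hx'⟩)
  refine ⟨R', hR'R, hR'unc, fun x hx ε hε hc => hx.2 ε hε ?_⟩
  refine ((hc.union hcnt).mono fun y hy => ?_)
  by_cases hy' : y ∈ R'
  · exact Or.inl ⟨hy', hy.2⟩
  · exact Or.inr ⟨hy.1, hy'⟩

def SchemeInv {K : Type*} [MetricSpace K] (R' : Set K) (U : ℕ → Set (K × K)) (n : ℕ)
    (p : ((Fin n → Bool) → K) × ℝ) : Prop :=
  (∀ s, p.1 s ∈ R') ∧ Function.Injective p.1 ∧ 0 < p.2 ∧ p.2 ≤ (1/2 : ℝ) ^ n ∧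
    ∀ s t, s ≠ t → (Metric.closedBall (p.1 s) p.2 ×ˢ Metric.closedBall (p.1 t) p.2 ⊆ U n ∧
      Disjoint (Metric.closedBall (p.1 s) p.2) (Metric.closedBall (p.1 t) p.2))

lemma aux_step {K : Type*} [MetricSpace K] (R' : Set K)
    (hcond : ∀ x ∈ R', ∀ ε > 0, ¬ (R' ∩ ball x ε).Countable)
    (U : ℕ → Set (K × K)) (hUopen : ∀ n, IsOpen (U n))
    (hpair : ∀ x y : K, x ∈ R' → y ∈ R' → x ≠ y → ∀ n, (x, y) ∈ U n)
    (n : ℕ) (p : ((Fin n → Bool) → K) × ℝ) (hp : SchemeInv R' U n p) :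
    ∃ q : ((Fin (n+1) → Bool) → K) × ℝ, SchemeInv R' U (n+1) q ∧
      ∀ (s : Fin n → Bool) (c : Bool),
        closedBall (q.1 (Fin.snoc s c)) q.2 ⊆ closedBall (p.1 s) p.2 := by
  obtain ⟨hmem, hinj, hεpos, hεle, hsep⟩ := hp
  have h2 : ∀ s : Fin n → Bool, ∃ u' v' : K, (u' ∈ R' ∩ ball (p.1 s) (p.2/2)) ∧
      (v' ∈ R' ∩ ball (p.1 s) (p.2/2)) ∧ u' ≠ v' := by
    intro s
    have h := hcond (p.1 s) (hmem s) (p.2/2) (by linarith)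
    have hnt : (R' ∩ ball (p.1 s) (p.2/2)).Nontrivial :=
      Set.not_subsingleton_iff.1 fun hss => h hss.countable
    obtain ⟨u, hu, v, hv, huv⟩ := hnt
    exact ⟨u, v, hu, hv, huv⟩
  choose u v hu hv huv using h2
  set y : (Fin (n+1) → Bool) → K :=
    fun t => cond (t (Fin.last n)) (v (Fin.init t)) (u (Fin.init t)) with hy
  have hyR' : ∀ t, y t ∈ R' := by
    intro t
    cases htl : t (Fin.last n) <;> simp only [hy, htl, Bool.cond_false, Bool.cond_true]
    exacts [(hu _).1, (hv _).1]
  have hyball : ∀ t, y t ∈ ball (p.1 (Fin.init t)) (p.2/2) := by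
    intro t
    cases htl : t (Fin.last n) <;> simp only [hy, htl, Bool.cond_false, Bool.cond_true]
    exacts [(hu _).2, (hv _).2]
  have hyinj : Function.Injective y := by
    intro t t' h
    by_cases hi : Fin.init t = Fin.init t'
    · have hb : t (Fin.last n) = t' (Fin.last n) := by
        by_contra hb
        rw [hy] at h; dsimp only at h
        cases htl : t (Fin.last n) <;> cases htl' : t' (Fin.last n) <;>
          rw [htl, htl'] at h hb <;>
          simp only [Bool.cond_false, Bool.cond_true] at h
        · exact hb rfl
        · rw [hi] at h; exact huv _ h
        · rw [hi] at h; exact huv _ h.symm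
        · exact hb rfl
      rw [← Fin.snoc_init_self t, ← Fin.snoc_init_self t', hi, hb]
    · exfalso
      have h1 : y t ∈ closedBall (p.1 (Fin.init t)) p.2 :=
        closedBall_subset_closedBall (by linarith) (ball_subset_closedBall (hyball t))
      have h2' : y t' ∈ closedBall (p.1 (Fin.init t')) p.2 :=
        closedBall_subset_closedBall (by linarith) (ball_subset_closedBall (hyball t'))
      rw [← h] at h2'
      exact Set.disjoint_left.1 (hsep _ _ hi).2 h1 h2'
  have hyU : ∀ t t', t ≠ t' → (y t, y t') ∈ U (n+1) :=
    fun t t' h => hpair _ _ (hyR' t) (hyR' t') (fun he => h (hyinj he)) (n+1)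
  obtain ⟨ε₁, hε₁, hsep'⟩ := aux_sep y hyinj (U (n+1)) (hUopen (n+1)) hyU
  set ε' := min ε₁ (min (p.2/2) ((1/2 : ℝ)^(n+1))) with hε'def
  have hε'pos : 0 < ε' := lt_min hε₁ (lt_min (by linarith) (by positivity))
  have hε'le1 : ε' ≤ ε₁ := min_le_left _ _
  have hε'le2 : ε' ≤ p.2/2 := le_trans (min_le_right _ _) (min_le_left _ _)
  have hε'le3 : ε' ≤ (1/2 : ℝ)^(n+1) := le_trans (min_le_right _ _) (min_le_right _ _)
  refine ⟨(y, ε'), ⟨hyR', hyinj, hε'pos, hε'le3, ?_⟩, ?_⟩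
  · intro s t hst
    refine ⟨subset_trans (Set.prod_mono (closedBall_subset_closedBall hε'le1)
      (closedBall_subset_closedBall hε'le1)) (hsep' s t hst).1, ?_⟩
    exact ((hsep' s t hst).2.mono (closedBall_subset_closedBall hε'le1)
      (closedBall_subset_closedBall hε'le1))
  · intro s c z hz
    have h1 : Fin.init (α := fun _ => Bool) (Fin.snoc s c) = s := by
      funext i; simp [Fin.init, Fin.snoc_castSucc]
    have h2' := hyball (Fin.snoc s c)
    rw [h1] at h2'
    rw [mem_closedBall] at hz ⊢
    have ht := dist_triangle z (y (Fin.snoc s c)) (p.1 s)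
    have hz2 : dist (y (Fin.snoc s c)) (p.1 s) < p.2/2 := mem_ball.1 h2'
    linarith

set_option maxHeartbeats 1000000 in
/-- **From an uncountable set to a perfect set inside a symmetric `G_δ`.**
Let `(K, r)` be a compact metric space and `A` a symmetric `G_δ` subset of `K × K`.
If an uncountable set `R ⊆ K` satisfies `(R × R) \ diagonal ⊆ A`, then there is a nonempty
perfect set `P ⊆ K` with `(P × P) \ diagonal ⊆ A`. -/
theorem stmt_5 {K : Type*} [MetricSpace K] [CompactSpace K]
    (A : Set (K × K)) (hsym : ∀ p ∈ A, Prod.swap p ∈ A) (hGδ : IsGδ A)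
    (R : Set K) (hR : ¬ R.Countable)
    (hRA : (R ×ˢ R) \ Set.diagonal K ⊆ A) :
    ∃ P : Set K, P.Nonempty ∧ Perfect P ∧ (P ×ˢ P) \ Set.diagonal K ⊆ A := by
  classical
  obtain ⟨U0, hU0open, hU0⟩ := hGδ.eq_iInter_nat
  set U : ℕ → Set (K × K) := fun n => ⋂ i ∈ Finset.range (n+1), U0 i with hUdef
  have hUopen : ∀ n, IsOpen (U n) := fun n => isOpen_biInter_finset fun i _ => hU0open i
  have hAU : ∀ n, A ⊆ U n := by
    intro n x hx
    rw [hU0] at hx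
    exact Set.mem_iInter₂.2 fun i _ => Set.mem_iInter.1 hx i
  have hUA : (⋂ n, U n) ⊆ A := by
    intro x hx
    rw [hU0]
    refine Set.mem_iInter.2 fun n => ?_
    exact Set.mem_iInter₂.1 (Set.mem_iInter.1 hx n) n (Finset.mem_range.2 (Nat.lt_succ_self n))
  have hUanti : ∀ m n, m ≤ n → U n ⊆ U m := by
    intro m n h x hx
    exact Set.mem_iInter₂.2 fun i hi => Set.mem_iInter₂.1 hx i
      (Finset.mem_range.2 (lt_of_lt_of_le (Finset.mem_range.1 hi) (by omega)))
  obtain ⟨R', hR'R, hR'unc, hcond⟩ := aux_cond R hR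
  have hpair : ∀ x y : K, x ∈ R' → y ∈ R' → x ≠ y → ∀ n, (x, y) ∈ U n :=
    fun x y hx hy hxy n => hAU n (hRA ⟨⟨hR'R hx, hR'R hy⟩, fun hd => hxy hd⟩)
  have hR'ne : R'.Nonempty := by
    rcases R'.eq_empty_or_nonempty with h | h
    · exact absurd (h ▸ Set.countable_empty) hR'unc
    · exact h
  obtain ⟨x0, hx0⟩ := hR'ne
  have hsing : ∀ s t : Fin 0 → Bool, s = t := fun s t => funext fun i => i.elim0
  have hbase : SchemeInv R' U 0 ((fun _ => x0 : (Fin 0 → Bool) → K), (1:ℝ)) := by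
    refine ⟨fun _ => hx0, fun s t _ => hsing s t, one_pos, by norm_num, ?_⟩
    intro s t hst
    exact absurd (hsing s t) hst
  have H : ∀ n (p : ((Fin n → Bool) → K) × ℝ), ∃ q : ((Fin (n+1) → Bool) → K) × ℝ,
      SchemeInv R' U n p → (SchemeInv R' U (n+1) q ∧ ∀ (s : Fin n → Bool) (c : Bool),
        closedBall (q.1 (Fin.snoc s c)) q.2 ⊆ closedBall (p.1 s) p.2) := by
    intro n p
    by_cases hp : SchemeInv R' U n p
    · obtain ⟨qq, h1, h2⟩ := aux_step R' hcond U hUopen hpair n p hp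
      exact ⟨qq, fun _ => ⟨h1, h2⟩⟩
    · exact ⟨((fun _ => x0), 1), fun h => absurd h hp⟩
  choose F hF using H
  set g : ∀ n, ((Fin n → Bool) → K) × ℝ :=
    fun n => Nat.rec (motive := fun n => ((Fin n → Bool) → K) × ℝ)
      ((fun _ => x0 : (Fin 0 → Bool) → K), (1:ℝ)) (fun n ih => F n ih) n with hgdef
  have hg : ∀ n, SchemeInv R' U n (g n) := by
    intro n
    induction n with
    | zero => exact hbase
    | succ n ih => exact (hF n (g n) ih).1
  have hlink : ∀ n (s : Fin n → Bool) (c : Bool),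
      closedBall ((g (n+1)).1 (Fin.snoc s c)) (g (n+1)).2 ⊆ closedBall ((g n).1 s) (g n).2 :=
    fun n => (hF n (g n) (hg n)).2
  set q : (ℕ → Bool) → ℕ → K := fun σ n => (g n).1 (fun i : Fin n => σ i) with hqdef
  set eps : ℕ → ℝ := fun n => (g n).2 with hepsdef
  have hepspos : ∀ n, 0 < eps n := fun n => (hg n).2.2.1
  have hepsle : ∀ n, eps n ≤ (1/2:ℝ)^n := fun n => (hg n).2.2.2.1
  have hpref : ∀ (σ : ℕ → Bool) n,
      (fun i : Fin (n+1) => σ i) = Fin.snoc (fun i : Fin n => σ i) (σ n) := by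
    intro σ n
    funext i
    refine Fin.lastCases ?_ ?_ i
    · rw [Fin.snoc_last, Fin.val_last]
    · intro j
      rw [Fin.snoc_castSucc, Fin.coe_castSucc]
  have hnest : ∀ σ n, closedBall (q σ (n+1)) (eps (n+1)) ⊆ closedBall (q σ n) (eps n) := by
    intro σ n
    have h := hlink n (fun i : Fin n => σ i) (σ n)
    rw [← hpref σ n] at h
    exact h
  have hmono : ∀ σ m n, m ≤ n → closedBall (q σ n) (eps n) ⊆ closedBall (q σ m) (eps m) := by
    intro σ m n h
    induction n, h using Nat.le_induction with
    | base => exact subset_rfl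
    | succ n hmn ih => exact subset_trans (hnest σ n) ih
  have hqmem : ∀ σ n m, n ≤ m → q σ m ∈ closedBall (q σ n) (eps n) :=
    fun σ n m h => hmono σ n m h (mem_closedBall_self (hepspos m).le)
  have hcauchy : ∀ σ, CauchySeq (q σ) := by
    intro σ
    refine cauchySeq_of_le_geometric (1/2) 1 (by norm_num) fun n => ?_
    have h1 := hqmem σ n (n+1) (Nat.le_succ n)
    rw [mem_closedBall] at h1
    rw [dist_comm, one_mul]
    exact le_trans h1 (hepsle n)
  have hlim : ∀ σ : ℕ → Bool, ∃ l, Filter.Tendsto (q σ) Filter.atTop (nhds l) :=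
    fun σ => cauchySeq_tendsto_of_complete (hcauchy σ)
  choose f hf using hlim
  have hfmem : ∀ σ n, f σ ∈ closedBall (q σ n) (eps n) := by
    intro σ n
    refine Metric.isClosed_closedBall.mem_of_tendsto (hf σ) ?_
    exact Filter.eventually_atTop.2 ⟨n, fun m hm => hqmem σ n m hm⟩
  have hfdist : ∀ σ n, dist (f σ) (q σ n) ≤ eps n := by
    intro σ n
    have h := hfmem σ n
    rwa [mem_closedBall] at h
  have hagree : ∀ (σ τ : ℕ → Bool) n, (∀ i < n, σ i = τ i) → q σ n = q τ n := by
    intro σ τ n h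
    simp only [hqdef]
    exact congrArg _ (funext fun i => h i i.2)
  have hclose : ∀ (σ τ : ℕ → Bool) n, (∀ i < n, σ i = τ i) →
      dist (f σ) (f τ) ≤ 2 * (1/2:ℝ)^n := by
    intro σ τ n h
    have h1 := hfdist σ n
    have h2 := hfdist τ n
    have h3 := hagree σ τ n h
    have ht := dist_triangle (f σ) (q σ n) (f τ)
    have h2' : dist (q σ n) (f τ) ≤ eps n := by rw [h3, dist_comm]; exact h2
    have h4 := hepsle n
    linarith
  have hdiffpref : ∀ (σ τ : ℕ → Bool) (n N : ℕ), n < N → σ n ≠ τ n →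
      (fun i : Fin N => σ i) ≠ (fun i : Fin N => τ i) := by
    intro σ τ n N hn h hcon
    exact h (congrFun hcon ⟨n, hn⟩)
  have hfne : ∀ σ τ : ℕ → Bool, σ ≠ τ → f σ ≠ f τ := by
    intro σ τ hστ
    obtain ⟨n, hn⟩ := Function.ne_iff.1 hστ
    have hd := hdiffpref σ τ n (n+1) (Nat.lt_succ_self n) hn
    have hdisj := ((hg (n+1)).2.2.2.2 _ _ hd).2
    intro hcon
    have h1 := hfmem σ (n+1)
    have h2 := hfmem τ (n+1)
    rw [hcon] at h1
    exact Set.disjoint_left.1 hdisj h1 h2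
  have hfA : ∀ σ τ : ℕ → Bool, σ ≠ τ → (f σ, f τ) ∈ A := by
    intro σ τ hστ
    apply hUA
    refine Set.mem_iInter.2 fun m => ?_
    obtain ⟨n, hn⟩ := Function.ne_iff.1 hστ
    have hd := hdiffpref σ τ n (max (n+1) m)
      (lt_of_lt_of_le (Nat.lt_succ_self n) (le_max_left _ _)) hn
    have hsub := ((hg (max (n+1) m)).2.2.2.2 _ _ hd).1
    refine hUanti m (max (n+1) m) (le_max_right _ _) (hsub ?_)
    exact Set.mem_prod.2 ⟨hfmem σ (max (n+1) m), hfmem τ (max (n+1) m)⟩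
  have hsmall : ∀ δ : ℝ, 0 < δ → ∃ n : ℕ, (2:ℝ) * (1/2)^n < δ := by
    intro δ hδ
    obtain ⟨n, hn⟩ := exists_pow_lt_of_lt_one (show (0:ℝ) < δ/2 by linarith)
      (by norm_num : (1/2:ℝ) < 1)
    exact ⟨n, by linarith⟩
  have hcont : Continuous f := by
    rw [continuous_iff_continuousAt]
    intro σ
    rw [ContinuousAt, Metric.tendsto_nhds]
    intro δ hδ
    obtain ⟨n, hn⟩ := hsmall δ hδ
    have he : ∀ i : Fin n, ∀ᶠ τ : ℕ → Bool in nhds σ, τ (i:ℕ) = σ (i:ℕ) := by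
      intro i
      have hopen : IsOpen ((fun τ : ℕ → Bool => τ (i:ℕ)) ⁻¹' {σ (i:ℕ)}) :=
        (isOpen_discrete _).preimage (continuous_apply _)
      exact hopen.mem_nhds rfl
    have hev : ∀ᶠ τ : ℕ → Bool in nhds σ, ∀ i : Fin n, τ (i:ℕ) = σ (i:ℕ) :=
      Filter.eventually_all.2 he
    refine hev.mono fun τ hτ => ?_
    have hle : dist (f τ) (f σ) ≤ 2 * (1/2:ℝ)^n := hclose τ σ n fun i hi => hτ ⟨i, hi⟩
    linarith
  refine ⟨Set.range f, ⟨f (fun _ => false), Set.mem_range_self _⟩,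
    ⟨(isCompact_range hcont).isClosed, ?_⟩, ?_⟩
  · intro z hz
    obtain ⟨σ, rfl⟩ := hz
    rw [accPt_iff_nhds]
    intro V hV
    obtain ⟨δ, hδ, hball⟩ := Metric.mem_nhds_iff.1 hV
    obtain ⟨n, hn⟩ := hsmall δ hδ
    have hτσ : Function.update σ n (!(σ n)) ≠ σ := by
      intro h
      have h2 := congrFun h n
      simp at h2
    have hagr : ∀ i < n, Function.update σ n (!(σ n)) i = σ i := by
      intro i hi
      exact Function.update_of_ne (Nat.ne_of_lt hi) _ _
    refine ⟨f (Function.update σ n (!(σ n))), ⟨hball ?_, Set.mem_range_self _⟩,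
      hfne _ σ hτσ⟩
    rw [mem_ball]
    exact lt_of_le_of_lt (hclose _ σ n hagr) hn
  · rintro ⟨z1, z2⟩ ⟨⟨h1, h2⟩, hd⟩
    obtain ⟨σ, rfl⟩ := h1
    obtain ⟨τ, rfl⟩ := h2
    refine hfA σ τ fun h => hd ?_
    rw [h]
    exact rfl
end

section
/- Let u : ℕ → 𝔻 be a bounded sequence and let (X, T) be a topological dynamical system satisfying the strong u-MOMO property: for every increasing sequence (b_k) with b_{k+1} − b_k → ∞, every f ∈ C(X), and every choice of points x_k ∈ X, one has (1/b_K) ∑_{k<K} |∑_{b_k ≤ n < b_{k+1}} u(n) f(T^{n−b_k} x_k)| → 0 as K → ∞. Then for any compact metric space Y, the product system (X × Y, T × Id_Y) also satisfies the strong u-MOMO property. -/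
open Filter Topology

/-- The strong `u`-MOMO property of a topological dynamical system `(X, T)`:
for every increasing sequence `(b_k)` with `b_{k+1} - b_k → ∞`, every continuous `f` and
every choice of points `(x_k)`,
`(1/b_K) ∑_{k<K} |∑_{b_k ≤ n < b_{k+1}} u(n) f(T^{n-b_k} x_k)| → 0`. -/
def StrongMOMO {X : Type*} [TopologicalSpace X] (u : ℕ → ℂ) (T : X → X) : Prop :=
  ∀ b : ℕ → ℕ, StrictMono b → Tendsto (fun k => b (k + 1) - b k) atTop atTop →
    ∀ f : X → ℂ, Continuous f → ∀ x : ℕ → X,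
      Tendsto (fun K => (1 / (b K : ℝ)) * ∑ k ∈ Finset.range K,
          ‖∑ n ∈ Finset.Ico (b k) (b (k + 1)), u n * f (T^[n - b k] (x k))‖)
        atTop (𝓝 0)

/-- **Strong `u`-MOMO passes to products with an identity.**
If a homeomorphism `T` of a compact metric space `X` satisfies the strong `u`-MOMO property
for a bounded sequence `u : ℕ → 𝔻`, then so does `T × Id_Y` for any compact metric space `Y`. -/
theorem stmt_17 {X Y : Type*} [MetricSpace X] [CompactSpace X] [MetricSpace Y] [CompactSpace Y]
    (u : ℕ → ℂ) (hu : ∀ n, ‖u n‖ ≤ 1)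
    (T : X → X) (hT : IsHomeomorph T) (hmomo : StrongMOMO u T) :
    StrongMOMO u (Prod.map T (id : Y → Y)) := by
  intro b hb hgap f hf x
  rw [Metric.tendsto_atTop]
  intro ε hε
  -- uniform continuity of f
  have hfc : UniformContinuous f := CompactSpace.uniformContinuous_of_continuous hf
  rw [Metric.uniformContinuous_iff] at hfc
  obtain ⟨δ, hδ, hδf⟩ := hfc (ε / 4) (by positivity)
  -- finite δ-net of Y
  obtain ⟨t, -, htf, htc⟩ :=
    (isCompact_univ : IsCompact (Set.univ : Set Y)).finite_cover_balls hδ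
  -- choose nearest net point for each k
  have hchoice : ∀ k : ℕ, ∃ z ∈ t, dist ((x k).2) z < δ := by
    intro k
    have := htc (Set.mem_univ (x k).2)
    simp only [Set.mem_iUnion, Metric.mem_ball] at this
    obtain ⟨z, hz, hzd⟩ := this
    exact ⟨z, hz, hzd⟩
  choose c hc hcd using hchoice
  set ts : Finset Y := htf.toFinset with hts
  have hcts : ∀ k, c k ∈ ts := fun k => htf.mem_toFinset.mpr (hc k)
  -- the MOMO sums for each slice f(·, z)
  set M : Y → ℕ → ℝ := fun z K => (1 / (b K : ℝ)) * ∑ k ∈ Finset.range K,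
      ‖∑ n ∈ Finset.Ico (b k) (b (k + 1)), u n * f (T^[n - b k] ((x k).1), z)‖
    with hM
  have hMz : ∀ z : Y, Tendsto (M z) atTop (𝓝 0) := by
    intro z
    exact hmomo b hb hgap (fun p => f (p, z))
      (hf.comp (Continuous.prodMk_left z)) (fun k => (x k).1)
  have hG : Tendsto (fun K => ∑ z ∈ ts, M z K) atTop (𝓝 0) := by
    have := tendsto_finset_sum ts (fun z _ => hMz z)
    simpa using this
  rw [Metric.tendsto_atTop] at hG
  obtain ⟨N, hN⟩ := hG (ε / 2) (by positivity)
  refine ⟨max N 1, fun K hK => ?_⟩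
  have hK1 : 1 ≤ K := le_trans (le_max_right N 1) hK
  have hKN : N ≤ K := le_trans (le_max_left N 1) hK
  have hbK : (0 : ℝ) < b K := by
    have : 1 ≤ b K := le_trans hK1 hb.le_apply
    exact_mod_cast this
  -- nonnegativity of the target sequence
  set S : ℕ → ℝ := fun K => (1 / (b K : ℝ)) * ∑ k ∈ Finset.range K,
      ‖∑ n ∈ Finset.Ico (b k) (b (k + 1)),
        u n * f ((Prod.map T (id : Y → Y))^[n - b k] (x k))‖ with hS
  have hSnn : 0 ≤ S K := by
    apply mul_nonneg (by positivity)
    exact Finset.sum_nonneg fun k _ => norm_nonneg _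
  -- per-block estimate
  have hblock : ∀ k : ℕ,
      ‖∑ n ∈ Finset.Ico (b k) (b (k + 1)),
        u n * f ((Prod.map T (id : Y → Y))^[n - b k] (x k))‖
      ≤ ‖∑ n ∈ Finset.Ico (b k) (b (k + 1)),
          u n * f (T^[n - b k] ((x k).1), c k)‖
        + (ε / 4) * ((b (k + 1) : ℝ) - b k) := by
    intro k
    have hiter : ∀ n, (Prod.map T (id : Y → Y))^[n - b k] (x k)
        = (T^[n - b k] ((x k).1), (x k).2) := by
      intro n
      rw [Prod.map_iterate]
      simp [Prod.map]
    set A := ∑ n ∈ Finset.Ico (b k) (b (k + 1)),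
        u n * f ((Prod.map T (id : Y → Y))^[n - b k] (x k)) with hA
    set B := ∑ n ∈ Finset.Ico (b k) (b (k + 1)),
        u n * f (T^[n - b k] ((x k).1), c k) with hB
    have key : ‖A - B‖ ≤ (ε / 4) * ((b (k + 1) : ℝ) - b k) := by
      rw [hA, hB, ← Finset.sum_sub_distrib]
      calc ‖∑ n ∈ Finset.Ico (b k) (b (k + 1)),
              (u n * f ((Prod.map T (id : Y → Y))^[n - b k] (x k))
                - u n * f (T^[n - b k] ((x k).1), c k))‖
          ≤ ∑ n ∈ Finset.Ico (b k) (b (k + 1)),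
              ‖u n * f ((Prod.map T (id : Y → Y))^[n - b k] (x k))
                - u n * f (T^[n - b k] ((x k).1), c k)‖ := by
            exact norm_sum_le _ _
        _ ≤ ∑ n ∈ Finset.Ico (b k) (b (k + 1)), ε / 4 := by
            apply Finset.sum_le_sum
            intro n _
            rw [← mul_sub, norm_mul]
            have hd : ‖f ((Prod.map T (id : Y → Y))^[n - b k] (x k))
                - f (T^[n - b k] ((x k).1), c k)‖ ≤ ε / 4 := by
              rw [hiter n]
              have : dist ((T^[n - b k] ((x k).1), (x k).2))
                  ((T^[n - b k] ((x k).1), c k)) < δ := by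
                rw [Prod.dist_eq]
                simp only [dist_self]
                exact max_lt hδ (hcd k)
              have := hδf this
              rw [Complex.dist_eq] at this
              exact this.le
            calc ‖u n‖ * ‖f ((Prod.map T (id : Y → Y))^[n - b k] (x k))
                  - f (T^[n - b k] ((x k).1), c k)‖
                ≤ 1 * (ε / 4) := by
                  apply mul_le_mul (hu n) hd (norm_nonneg _) zero_le_one
              _ = ε / 4 := one_mul _
        _ = (ε / 4) * ((b (k + 1) : ℝ) - b k) := by
            rw [Finset.sum_const, Nat.card_Ico, nsmul_eq_mul, mul_comm]
            congr 1
            rw [Nat.cast_sub (le_of_lt (hb (lt_add_one k)))]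
    calc ‖A‖ = ‖B + (A - B)‖ := by ring_nf
      _ ≤ ‖B‖ + ‖A - B‖ := norm_add_le _ _
      _ ≤ ‖B‖ + (ε / 4) * ((b (k + 1) : ℝ) - b k) := by linarith [key]
  -- now combine
  have hmain : S K ≤ (∑ z ∈ ts, M z K) + ε / 4 := by
    rw [hS]
    have step1 : ∑ k ∈ Finset.range K,
        ‖∑ n ∈ Finset.Ico (b k) (b (k + 1)),
          u n * f ((Prod.map T (id : Y → Y))^[n - b k] (x k))‖
        ≤ ∑ k ∈ Finset.range K, (‖∑ n ∈ Finset.Ico (b k) (b (k + 1)),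
            u n * f (T^[n - b k] ((x k).1), c k)‖ + (ε / 4) * ((b (k + 1) : ℝ) - b k)) :=
      Finset.sum_le_sum fun k _ => hblock k
    have step2 : ∀ k : ℕ, ‖∑ n ∈ Finset.Ico (b k) (b (k + 1)),
        u n * f (T^[n - b k] ((x k).1), c k)‖
        ≤ ∑ z ∈ ts, ‖∑ n ∈ Finset.Ico (b k) (b (k + 1)),
            u n * f (T^[n - b k] ((x k).1), z)‖ := by
      intro k
      exact Finset.single_le_sum
        (f := fun z => ‖∑ n ∈ Finset.Ico (b k) (b (k + 1)),
          u n * f (T^[n - b k] ((x k).1), z)‖)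
        (fun z _ => norm_nonneg _) (hcts k)
    have step3 : ∑ k ∈ Finset.range K, ((b (k + 1) : ℝ) - b k) = (b K : ℝ) - b 0 :=
      Finset.sum_range_sub (fun k => (b k : ℝ)) K
    have htele : ∑ k ∈ Finset.range K, (ε / 4) * ((b (k + 1) : ℝ) - b k)
        ≤ (ε / 4) * (b K : ℝ) := by
      rw [← Finset.mul_sum, step3]
      have : (b K : ℝ) - b 0 ≤ b K := by
        have : (0:ℝ) ≤ b 0 := Nat.cast_nonneg _
        linarith
      nlinarith
    calc (1 / (b K : ℝ)) * ∑ k ∈ Finset.range K,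
          ‖∑ n ∈ Finset.Ico (b k) (b (k + 1)),
            u n * f ((Prod.map T (id : Y → Y))^[n - b k] (x k))‖
        ≤ (1 / (b K : ℝ)) * (∑ k ∈ Finset.range K,
            (∑ z ∈ ts, ‖∑ n ∈ Finset.Ico (b k) (b (k + 1)),
              u n * f (T^[n - b k] ((x k).1), z)‖)
            + (ε / 4) * (b K : ℝ)) := by
          apply mul_le_mul_of_nonneg_left _ (by positivity)
          calc _ ≤ _ := step1
            _ ≤ _ := by
              rw [Finset.sum_add_distrib]
              exact add_le_add (Finset.sum_le_sum fun k _ => step2 k) htele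
      _ = (∑ z ∈ ts, M z K) + (1 / (b K : ℝ)) * ((ε / 4) * (b K : ℝ)) := by
          rw [mul_add]
          congr 1
          rw [Finset.sum_comm, hM, Finset.mul_sum]
      _ = (∑ z ∈ ts, M z K) + ε / 4 := by
          congr 1
          field_simp
      _ ≤ _ := le_refl _
  have hGK : ∑ z ∈ ts, M z K < ε / 2 := by
    have := hN K hKN
    rw [Real.dist_eq] at this
    calc ∑ z ∈ ts, M z K ≤ |∑ z ∈ ts, M z K| := le_abs_self _
      _ = |∑ z ∈ ts, M z K - 0| := by rw [sub_zero]
      _ < ε / 2 := this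
  rw [Real.dist_eq, sub_zero]
  have : S K < ε := by linarith
  calc |S K| = S K := abs_of_nonneg hSnn
    _ < ε := this
end
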